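/- arXiv:2207.03535 — 6 statements merged into one kernel-verified Lean document; each statement's English description precedes it below -/
import Mathlib

section
/- Define Θ : Σ³ → Matrix (Fin 2) (Fin 2) ℝ by Θ(x+iy, a+ib) = ![![x−a, b−y], ![b+y, x+a]] for x,y,a,b ∈ ℝ. Then det Θ(p) = 1 for every p ∈ Σ³, Θ(p ⋄ q) = Θ(p) * Θ(q) for all p,q ∈ Σ³, and Θ is a bijection from Σ³ onto SL₂(ℝ) = {M ∈ Matrix (Fin 2) (Fin 2) ℝ : det M = 1}. Hence the group (Σ³, ⋄) is isomorphic to SL₂(ℝ). -/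
open Complex Matrix

/-- The dual space `Σ³` as a subset of `ℂ × ℂ`. -/
def Sigma3 : Set (ℂ × ℂ) := {p | ‖p.1‖ ^ 2 - ‖p.2‖ ^ 2 = 1}

/-- The multiplication `⋄` on `Σ³`. -/
def sigMul (p q : ℂ × ℂ) : ℂ × ℂ :=
  (p.1 * q.1 + (starRingEnd ℂ) p.2 * q.2, p.2 * q.1 + (starRingEnd ℂ) p.1 * q.2)

/-- The map `Θ : Σ³ → ℝ^{2×2}`, `Θ(x+iy, a+ib) = ![![x−a, b−y], ![b+y, x+a]]`. -/
def ThetaSigma3 (p : ℂ × ℂ) : Matrix (Fin 2) (Fin 2) ℝ :=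
  !![p.1.re - p.2.re, p.2.im - p.1.im; p.2.im + p.1.im, p.1.re + p.2.re]

lemma mem_sigma3 (p : ℂ × ℂ) :
    p ∈ Sigma3 ↔ p.1.re ^ 2 + p.1.im ^ 2 - p.2.re ^ 2 - p.2.im ^ 2 = 1 := by
  simp only [Sigma3, Set.mem_setOf_eq, Complex.sq_norm, Complex.normSq_apply]
  ring_nf

lemma theta_det (p : ℂ × ℂ) (hp : p ∈ Sigma3) : (ThetaSigma3 p).det = 1 := by
  rw [mem_sigma3] at hp
  simp [ThetaSigma3, Matrix.det_fin_two_of]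
  linarith [hp]

theorem theta_is_group_isomorphism_onto_SL2R :
    (∀ p ∈ Sigma3, (ThetaSigma3 p).det = 1) ∧
    (∀ p ∈ Sigma3, ∀ q ∈ Sigma3, ThetaSigma3 (sigMul p q) = ThetaSigma3 p * ThetaSigma3 q) ∧
    Set.BijOn ThetaSigma3 Sigma3 {M : Matrix (Fin 2) (Fin 2) ℝ | M.det = 1} := by
  refine ⟨theta_det, ?_, ?_, ?_, ?_⟩
  · intro p _ q _
    simp only [ThetaSigma3, sigMul, Matrix.mul_fin_two, Complex.add_re, Complex.add_im,
      Complex.mul_re, Complex.mul_im, Complex.conj_re, Complex.conj_im]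
    congr 1 <;> ring_nf
  · intro p hp
    exact theta_det p hp
  · intro p hp q hq h
    have h00 := congrFun (congrFun h 0) 0
    have h01 := congrFun (congrFun h 0) 1
    have h10 := congrFun (congrFun h 1) 0
    have h11 := congrFun (congrFun h 1) 1
    simp only [ThetaSigma3, Matrix.of_apply, Matrix.cons_val', Matrix.cons_val_zero,
      Matrix.cons_val_one, Matrix.head_cons, Matrix.empty_val', Matrix.cons_val_fin_one,
      Matrix.head_fin_const] at h00 h01 h10 h11
    have : p.1 = q.1 ∧ p.2 = q.2 := by
      constructor <;> apply Complex.ext <;> linarith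
    exact Prod.ext this.1 this.2
  · intro M hM
    simp only [Set.mem_setOf_eq, Matrix.det_fin_two] at hM
    refine ⟨(⟨(M 0 0 + M 1 1)/2, (M 1 0 - M 0 1)/2⟩, ⟨(M 1 1 - M 0 0)/2, (M 1 0 + M 0 1)/2⟩), ?_, ?_⟩
    · rw [mem_sigma3]
      simp only
      ring_nf
      ring_nf at hM
      linarith
    · ext i j
      fin_cases i <;> fin_cases j <;> simp [ThetaSigma3] <;> ring
end

section
/- Let λ, μ, ν > 0. With ∇ the unique ℝ-bilinear map satisfying the Koszul formula for (V, g, [·,·]) and R(A,B)C := ∇_A(∇_B C) − ∇_B(∇_A C) − ∇_{[A,B]} C, the sectional curvatures of the generalised Riemannian Berger sphere satisfy g(R(X,Y)Y, X) = ((λ²−μ²+ν²)² + 4ν²(μ²−ν²))/(λμν)², g(R(X,Z)Z, X) = ((λ²+μ²−ν²)² − 4μ²(μ²−ν²))/(λμν)², and g(R(Y,Z)Z, Y) = ((λ²+μ²+ν²)² − 4(λ⁴+μ²ν²))/(λμν)². -/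
/-- The Euclidean inner product on `ℝ³` making `X, Y, Z` orthonormal. -/
def gEuc (v w : Fin 3 → ℝ) : ℝ := v 0 * w 0 + v 1 * w 1 + v 2 * w 2

/-! In the orthonormal frame the bracket has Milnor's diagonal form `[e₁,e₂] = a e₃`,
`[e₃,e₁] = b e₂`, `[e₂,e₃] = c e₁`, so the Koszul formula makes `∇` constant on the frame, e.g.
`∇_{e₁} e₂ = ((a + b - c)/2) e₃` and `∇_{eᵢ} eᵢ = 0`. Then `R(e₁,e₂)e₂` is a multiple of `e₁` and
`K(e₁,e₂) = ((b - c)² + 2a(b + c) - 3a²)/4`, with the cyclic analogues for the other planes.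
For the Berger sphere `a = 2ν/(λμ)`, `b = 2μ/(λν)`, `c = 2λ/(μν)`, and clearing denominators gives
the stated values. -/

local notation "e₁" => (![1, 0, 0] : Fin 3 → ℝ)
local notation "e₂" => (![0, 1, 0] : Fin 3 → ℝ)
local notation "e₃" => (![0, 0, 1] : Fin 3 → ℝ)

structure IsMilnorBracket (a b c : ℝ)
    (bracket : (Fin 3 → ℝ) →ₗ[ℝ] (Fin 3 → ℝ) →ₗ[ℝ] (Fin 3 → ℝ)) : Prop where
  isAlt : bracket.IsAlt
  e₁_e₂ : bracket e₁ e₂ = a • e₃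
  e₃_e₁ : bracket e₃ e₁ = b • e₂
  e₂_e₃ : bracket e₂ e₃ = c • e₁

def IsKoszulConnection (bracket nabla : (Fin 3 → ℝ) →ₗ[ℝ] (Fin 3 → ℝ) →ₗ[ℝ] (Fin 3 → ℝ)) : Prop :=
  ∀ A B C, 2 * gEuc (nabla A B) C =
    gEuc C (bracket A B) + gEuc B (bracket C A) - gEuc A (bracket B C)

def curvature (bracket nabla : (Fin 3 → ℝ) →ₗ[ℝ] (Fin 3 → ℝ) →ₗ[ℝ] (Fin 3 → ℝ))
    (A B C : Fin 3 → ℝ) : Fin 3 → ℝ :=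
  nabla A (nabla B C) - nabla B (nabla A C) - nabla (bracket A B) C

variable {a b c : ℝ} {bracket nabla : (Fin 3 → ℝ) →ₗ[ℝ] (Fin 3 → ℝ) →ₗ[ℝ] (Fin 3 → ℝ)}

namespace IsMilnorBracket

variable (hB : IsMilnorBracket a b c bracket)
include hB

lemma e₂_e₁ : bracket e₂ e₁ = -(a • e₃) := by rw [← hB.isAlt.neg, hB.e₁_e₂]

lemma e₁_e₃ : bracket e₁ e₃ = -(b • e₂) := by rw [← hB.isAlt.neg, hB.e₃_e₁]

lemma e₃_e₂ : bracket e₃ e₂ = -(c • e₁) := by rw [← hB.isAlt.neg, hB.e₂_e₃]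

end IsMilnorBracket

lemma eq_vecCons_gEuc (v : Fin 3 → ℝ) : v = ![gEuc v e₁, gEuc v e₂, gEuc v e₃] := by
  ext i
  fin_cases i <;> simp [gEuc]

namespace IsKoszulConnection

variable (hK : IsKoszulConnection bracket nabla)
include hK

lemma gEuc_eq (A B C : Fin 3 → ℝ) : gEuc (nabla A B) C =
    (gEuc C (bracket A B) + gEuc B (bracket C A) - gEuc A (bracket B C)) / 2 := by
  rw [← hK, mul_div_cancel_left₀ _ two_ne_zero]

variable (hB : IsMilnorBracket a b c bracket)
include hB

lemma nabla_e₂_e₂ : nabla e₂ e₂ = 0 := by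
  rw [eq_vecCons_gEuc (nabla _ _)]
  simp only [hK.gEuc_eq]
  simp [hB.isAlt.self_eq_zero, hB.e₁_e₂, hB.e₂_e₁, hB.e₂_e₃, hB.e₃_e₂, gEuc]

lemma nabla_e₃_e₃ : nabla e₃ e₃ = 0 := by
  rw [eq_vecCons_gEuc (nabla _ _)]
  simp only [hK.gEuc_eq]
  simp [hB.isAlt.self_eq_zero, hB.e₃_e₁, hB.e₁_e₃, hB.e₂_e₃, hB.e₃_e₂, gEuc]

lemma nabla_e₁_e₂ : nabla e₁ e₂ = ((a + b - c) / 2) • e₃ := by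
  rw [eq_vecCons_gEuc (nabla _ _)]
  simp only [hK.gEuc_eq]
  simp [hB.isAlt.self_eq_zero, hB.e₁_e₂, hB.e₂_e₁, hB.e₃_e₁, hB.e₂_e₃, gEuc]

lemma nabla_e₁_e₃ : nabla e₁ e₃ = ((c - a - b) / 2) • e₂ := by
  rw [eq_vecCons_gEuc (nabla _ _)]
  simp only [hK.gEuc_eq]
  simp [hB.isAlt.self_eq_zero, hB.e₂_e₁, hB.e₃_e₁, hB.e₁_e₃, hB.e₃_e₂, gEuc]
  ring

lemma nabla_e₂_e₃ : nabla e₂ e₃ = ((c + a - b) / 2) • e₁ := by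
  rw [eq_vecCons_gEuc (nabla _ _)]
  simp only [hK.gEuc_eq]
  simp [hB.isAlt.self_eq_zero, hB.e₁_e₂, hB.e₃_e₁, hB.e₂_e₃, hB.e₃_e₂, gEuc]

lemma nabla_e₃_e₁ : nabla e₃ e₁ = ((b + c - a) / 2) • e₂ := by
  rw [eq_vecCons_gEuc (nabla _ _)]
  simp only [hK.gEuc_eq]
  simp [hB.isAlt.self_eq_zero, hB.e₁_e₂, hB.e₃_e₁, hB.e₁_e₃, hB.e₂_e₃, gEuc]

lemma nabla_e₃_e₂ : nabla e₃ e₂ = ((a - b - c) / 2) • e₁ := by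
  rw [eq_vecCons_gEuc (nabla _ _)]
  simp only [hK.gEuc_eq]
  simp [hB.isAlt.self_eq_zero, hB.e₂_e₁, hB.e₁_e₃, hB.e₂_e₃, hB.e₃_e₂, gEuc]
  ring

lemma sectionalCurvature_e₁_e₂ :
    gEuc (curvature bracket nabla e₁ e₂ e₂) e₁ =
      ((b - c) ^ 2 + 2 * a * (b + c) - 3 * a ^ 2) / 4 := by
  simp only [curvature, hK.nabla_e₂_e₂ hB, hK.nabla_e₁_e₂ hB, hB.e₁_e₂, map_zero, map_smul,
    LinearMap.smul_apply, hK.nabla_e₂_e₃ hB, hK.nabla_e₃_e₂ hB]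
  simp [gEuc]
  ring

lemma sectionalCurvature_e₁_e₃ :
    gEuc (curvature bracket nabla e₁ e₃ e₃) e₁ =
      ((a - c) ^ 2 + 2 * b * (a + c) - 3 * b ^ 2) / 4 := by
  simp only [curvature, hK.nabla_e₃_e₃ hB, hK.nabla_e₁_e₃ hB, hB.e₁_e₃, map_zero, map_neg,
    map_smul, LinearMap.neg_apply, LinearMap.smul_apply, hK.nabla_e₂_e₃ hB, hK.nabla_e₃_e₂ hB]
  simp [gEuc]
  ring

lemma sectionalCurvature_e₂_e₃ :
    gEuc (curvature bracket nabla e₂ e₃ e₃) e₂ =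
      ((a - b) ^ 2 + 2 * c * (a + b) - 3 * c ^ 2) / 4 := by
  simp only [curvature, hK.nabla_e₃_e₃ hB, hK.nabla_e₂_e₃ hB, hB.e₂_e₃, map_zero, map_smul,
    LinearMap.smul_apply, hK.nabla_e₃_e₁ hB, hK.nabla_e₁_e₃ hB]
  simp [gEuc]
  ring

end IsKoszulConnection

theorem sectional_curvature_riemannian_berger_sphere
    (l m n : ℝ) (hl : 0 < l) (hm : 0 < m) (hn : 0 < n)
    (X Y Z : Fin 3 → ℝ) (hX : X = ![1, 0, 0]) (hY : Y = ![0, 1, 0]) (hZ : Z = ![0, 0, 1])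
    (bracket : (Fin 3 → ℝ) →ₗ[ℝ] (Fin 3 → ℝ) →ₗ[ℝ] (Fin 3 → ℝ))
    (halt : ∀ v, bracket v v = 0)
    (hXY : bracket X Y = (2 * n / (l * m)) • Z)
    (hZX : bracket Z X = (2 * m / (l * n)) • Y)
    (hYZ : bracket Y Z = (2 * l / (m * n)) • X)
    (nabla : (Fin 3 → ℝ) →ₗ[ℝ] (Fin 3 → ℝ) →ₗ[ℝ] (Fin 3 → ℝ))
    (hKoszul : ∀ A B C, 2 * gEuc (nabla A B) C =
      gEuc C (bracket A B) + gEuc B (bracket C A) - gEuc A (bracket B C))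
    (R : (Fin 3 → ℝ) → (Fin 3 → ℝ) → (Fin 3 → ℝ) → (Fin 3 → ℝ))
    (hR : ∀ A B C, R A B C = nabla A (nabla B C) - nabla B (nabla A C) - nabla (bracket A B) C) :
    gEuc (R X Y Y) X = ((l ^ 2 - m ^ 2 + n ^ 2) ^ 2 + 4 * n ^ 2 * (m ^ 2 - n ^ 2)) / (l * m * n) ^ 2 ∧
    gEuc (R X Z Z) X = ((l ^ 2 + m ^ 2 - n ^ 2) ^ 2 - 4 * m ^ 2 * (m ^ 2 - n ^ 2)) / (l * m * n) ^ 2 ∧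
    gEuc (R Y Z Z) Y = ((l ^ 2 + m ^ 2 + n ^ 2) ^ 2 - 4 * (l ^ 4 + m ^ 2 * n ^ 2)) / (l * m * n) ^ 2 := by
  subst hX hY hZ
  have hB : IsMilnorBracket _ _ _ bracket := ⟨halt, hXY, hZX, hYZ⟩
  have hK : IsKoszulConnection bracket nabla := hKoszul
  obtain rfl : R = curvature bracket nabla := funext fun A => funext fun B => funext (hR A B)
  rw [hK.sectionalCurvature_e₁_e₂ hB, hK.sectionalCurvature_e₁_e₃ hB,
    hK.sectionalCurvature_e₂_e₃ hB]
  refine ⟨?_, ?_, ?_⟩ <;> field_simp <;> ring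
end

section
/- Let λ, μ, ν > 0. With ∇ the unique ℝ-bilinear map satisfying the Koszul formula for (V, g, [·,·]) and R(A,B)C := ∇_A(∇_B C) − ∇_B(∇_A C) − ∇_{[A,B]} C, the Riemannian dual space satisfies g(R(X,Y)Y, X) = ((λ²+μ²−ν²)² + 4ν²(μ²−ν²))/(λμν)², g(R(X,Z)Z, X) = ((λ²−μ²+ν²)² − 4μ²(μ²−ν²))/(λμν)², and g(R(Y,Z)Z, Y) = −((λ²+μ²+ν²)² + 2(λ⁴−μ⁴−ν⁴))/(λμν)². -/
open Matrix

namespace MilnorFrame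

local notation "e₁" => (![1, 0, 0] : Fin 3 → ℝ)
local notation "e₂" => (![0, 1, 0] : Fin 3 → ℝ)
local notation "e₃" => (![0, 0, 1] : Fin 3 → ℝ)

noncomputable def connectionCoeff (c : Fin 3 → ℝ) (i : Fin 3) : ℝ := (c 0 + c 1 + c 2) / 2 - c i

theorem eq_basis_sum (v : Fin 3 → ℝ) : v = v 0 • e₁ + v 1 • e₂ + v 2 • e₃ := by
  ext i; fin_cases i <;> simp

theorem eq_of_forall_gEuc_eq {v w : Fin 3 → ℝ} (h : ∀ u, gEuc v u = gEuc w u) : v = w := by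
  ext i; fin_cases i
  · simpa [gEuc] using h e₁
  · simpa [gEuc] using h e₂
  · simpa [gEuc] using h e₃

theorem bracket_eq_mul_cross {c : Fin 3 → ℝ}
    {bracket : (Fin 3 → ℝ) →ₗ[ℝ] (Fin 3 → ℝ) →ₗ[ℝ] (Fin 3 → ℝ)}
    (halt : ∀ v, bracket v v = 0) (h₂₃ : bracket e₂ e₃ = c 0 • e₁)
    (h₃₁ : bracket e₃ e₁ = c 1 • e₂) (h₁₂ : bracket e₁ e₂ = c 2 • e₃) (v w : Fin 3 → ℝ) :
    bracket v w = c * v ⨯₃ w := by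
  have hanti (a b) : bracket b a = -bracket a b := (LinearMap.IsAlt.neg halt a b).symm
  rw [eq_basis_sum v, eq_basis_sum w]
  simp only [map_add, map_smul, LinearMap.add_apply, LinearMap.smul_apply, halt,
    hanti e₁ e₂, hanti e₂ e₃, hanti e₃ e₁, h₁₂, h₂₃, h₃₁]
  ext i; fin_cases i <;> simp [cross_apply] <;> ring

theorem koszul_mul_cross (c A B C : Fin 3 → ℝ) :
    2 * gEuc ((connectionCoeff c * A) ⨯₃ B) C =
      gEuc C (c * A ⨯₃ B) + gEuc B (c * C ⨯₃ A) - gEuc A (c * B ⨯₃ C) := by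
  simp [gEuc, cross_apply, connectionCoeff]; ring

theorem nabla_eq_mul_cross {c : Fin 3 → ℝ}
    {bracket nabla : (Fin 3 → ℝ) →ₗ[ℝ] (Fin 3 → ℝ) →ₗ[ℝ] (Fin 3 → ℝ)}
    (hbracket : ∀ v w, bracket v w = c * v ⨯₃ w)
    (hKoszul : ∀ A B C, 2 * gEuc (nabla A B) C =
      gEuc C (bracket A B) + gEuc B (bracket C A) - gEuc A (bracket B C))
    (A B : Fin 3 → ℝ) : nabla A B = (connectionCoeff c * A) ⨯₃ B :=
  eq_of_forall_gEuc_eq fun C => by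
    have h := hKoszul A B C
    rw [hbracket, hbracket, hbracket, ← koszul_mul_cross] at h
    linarith

theorem gEuc_curvature_eq {c : Fin 3 → ℝ}
    {bracket nabla : (Fin 3 → ℝ) →ₗ[ℝ] (Fin 3 → ℝ) →ₗ[ℝ] (Fin 3 → ℝ)}
    {R : (Fin 3 → ℝ) → (Fin 3 → ℝ) → (Fin 3 → ℝ) → (Fin 3 → ℝ)}
    (halt : ∀ v, bracket v v = 0) (h₂₃ : bracket e₂ e₃ = c 0 • e₁)
    (h₃₁ : bracket e₃ e₁ = c 1 • e₂) (h₁₂ : bracket e₁ e₂ = c 2 • e₃)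
    (hKoszul : ∀ A B C, 2 * gEuc (nabla A B) C =
      gEuc C (bracket A B) + gEuc B (bracket C A) - gEuc A (bracket B C))
    (hR : ∀ A B C, R A B C = nabla A (nabla B C) - nabla B (nabla A C) - nabla (bracket A B) C) :
    let a := connectionCoeff c
    gEuc (R e₁ e₂ e₂) e₁ = c 2 * a 2 - a 0 * a 1 ∧
    gEuc (R e₁ e₃ e₃) e₁ = c 1 * a 1 - a 0 * a 2 ∧
    gEuc (R e₂ e₃ e₃) e₂ = c 0 * a 0 - a 1 * a 2 := by
  have hbracket := bracket_eq_mul_cross halt h₂₃ h₃₁ h₁₂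
  simp only [hR, nabla_eq_mul_cross hbracket hKoszul, hbracket]
  refine ⟨?_, ?_, ?_⟩ <;> simp [gEuc, cross_apply] <;> ring

end MilnorFrame

theorem sectional_curvature_riemannian_dual_space
    (l m n : ℝ) (hl : 0 < l) (hm : 0 < m) (hn : 0 < n)
    (X Y Z : Fin 3 → ℝ) (hX : X = ![1, 0, 0]) (hY : Y = ![0, 1, 0]) (hZ : Z = ![0, 0, 1])
    (bracket : (Fin 3 → ℝ) →ₗ[ℝ] (Fin 3 → ℝ) →ₗ[ℝ] (Fin 3 → ℝ))
    (halt : ∀ v, bracket v v = 0)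
    (hXY : bracket X Y = (2 * n / (l * m)) • Z)
    (hZX : bracket Z X = (2 * m / (l * n)) • Y)
    (hYZ : bracket Y Z = -((2 * l / (m * n)) • X))
    (nabla : (Fin 3 → ℝ) →ₗ[ℝ] (Fin 3 → ℝ) →ₗ[ℝ] (Fin 3 → ℝ))
    (hKoszul : ∀ A B C, 2 * gEuc (nabla A B) C =
      gEuc C (bracket A B) + gEuc B (bracket C A) - gEuc A (bracket B C))
    (R : (Fin 3 → ℝ) → (Fin 3 → ℝ) → (Fin 3 → ℝ) → (Fin 3 → ℝ))
    (hR : ∀ A B C, R A B C = nabla A (nabla B C) - nabla B (nabla A C) - nabla (bracket A B) C) :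
    gEuc (R X Y Y) X = ((l ^ 2 + m ^ 2 - n ^ 2) ^ 2 + 4 * n ^ 2 * (m ^ 2 - n ^ 2)) / (l * m * n) ^ 2 ∧
    gEuc (R X Z Z) X = ((l ^ 2 - m ^ 2 + n ^ 2) ^ 2 - 4 * m ^ 2 * (m ^ 2 - n ^ 2)) / (l * m * n) ^ 2 ∧
    gEuc (R Y Z Z) Y = -(((l ^ 2 + m ^ 2 + n ^ 2) ^ 2 + 2 * (l ^ 4 - m ^ 4 - n ^ 4)) / (l * m * n) ^ 2) := by
  subst hX hY hZ
  obtain ⟨hK₁₂, hK₁₃, hK₂₃⟩ :=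
    MilnorFrame.gEuc_curvature_eq (c := ![-(2 * l / (m * n)), 2 * m / (l * n), 2 * n / (l * m)])
      halt (by simpa [neg_smul] using hYZ) (by simpa using hZX) (by simpa using hXY) hKoszul hR
  simp only [MilnorFrame.connectionCoeff, cons_val_zero, cons_val_one, cons_val_two, head_cons,
    tail_cons] at hK₁₂ hK₁₃ hK₂₃
  rw [hK₁₂, hK₁₃, hK₂₃]
  refine ⟨?_, ?_, ?_⟩ <;> field_simp <;> ring
end

section
/- Let μ > 0 and define H : (0, π/2) → ℝ by H(θ) = |cos(2θ)| / (μ·sin(2θ)). Then: (i) for every real C ≥ 0 there exists θ ∈ (0, π/2) with H(θ) = C; (ii) for θ ∈ (0, π/2), H(θ) = 0 if and only if θ = π/4; (iii) for every real C > 0 the set {θ ∈ (0, π/2) : H(θ) = C} has exactly two elements, one lying in (0, π/4) and one lying in (π/4, π/2). -/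
open Real Set

private lemma key_eq (k t : ℝ) (hk : 0 < k) (ht0 : 0 < t) (htπ : t < π) :
    |Real.cos t| = k * Real.sin t ↔
      t = Real.arctan (1 / k) ∨ t = π - Real.arctan (1 / k) := by
  have hs : 0 < Real.sin t := Real.sin_pos_of_pos_of_lt_pi ht0 htπ
  have ha0 : 0 < Real.arctan (1 / k) := by simpa using Real.arctan_strictMono (show (0:ℝ) < 1 / k by positivity)
  have ha2 : Real.arctan (1 / k) < π / 2 := Real.arctan_lt_pi_div_two _
  have hta : Real.tan (Real.arctan (1 / k)) = 1 / k := Real.tan_arctan _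
  have hca : 0 < Real.cos (Real.arctan (1 / k)) := Real.cos_arctan_pos _
  have hsa : k * Real.sin (Real.arctan (1 / k)) = Real.cos (Real.arctan (1 / k)) := by
    have := Real.tan_eq_sin_div_cos (Real.arctan (1 / k))
    rw [hta] at this
    field_simp at this
    linarith [this]
  constructor
  · intro h
    rcases lt_trichotomy (Real.cos t) 0 with hc | hc | hc
    · right
      have habs : -Real.cos t = k * Real.sin t := by rw [← h, abs_of_neg hc]
      have htgt : π / 2 < t := by
        by_contra hle
        push_neg at hle
        exact absurd (Real.cos_nonneg_of_mem_Icc ⟨by linarith, hle⟩) (not_le.mpr hc)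
      have htan : Real.tan (π - t) = 1 / k := by
        rw [Real.tan_pi_sub, Real.tan_eq_sin_div_cos]
        have hc' : Real.cos t = -(k * Real.sin t) := by linarith
        rw [hc']
        field_simp
      have : Real.arctan (Real.tan (π - t)) = π - t :=
        Real.arctan_tan (by linarith) (by linarith)
      rw [htan] at this
      linarith
    · exfalso
      rw [abs_of_nonneg hc.ge, hc] at h
      nlinarith
    · left
      have habs : Real.cos t = k * Real.sin t := by rw [← h, abs_of_pos hc]
      have htlt : t < π / 2 := by
        by_contra hle
        push_neg at hle
        exact absurd (Real.cos_nonpos_of_pi_div_two_le_of_le hle (by linarith)) (not_le.mpr hc)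
      have htan : Real.tan t = 1 / k := by
        rw [Real.tan_eq_sin_div_cos, habs]
        field_simp
      have : Real.arctan (Real.tan t) = t := Real.arctan_tan (by linarith) htlt
      rw [htan] at this
      linarith
  · rintro (rfl | rfl)
    · rw [abs_of_pos hca, hsa]
    · rw [Real.cos_pi_sub, Real.sin_pi_sub, abs_neg, abs_of_pos hca, hsa]

theorem cmc_tori_in_riemannian_berger_sphere (μ : ℝ) (hμ : 0 < μ)
    (H : ℝ → ℝ) (hH : ∀ θ ∈ Ioo 0 (π / 2), H θ = |Real.cos (2 * θ)| / (μ * Real.sin (2 * θ))) :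
    (∀ C : ℝ, 0 ≤ C → ∃ θ ∈ Ioo 0 (π / 2), H θ = C) ∧
    (∀ θ ∈ Ioo 0 (π / 2), H θ = 0 ↔ θ = π / 4) ∧
    (∀ C : ℝ, 0 < C → ∃ θ₁ ∈ Ioo 0 (π / 4), ∃ θ₂ ∈ Ioo (π / 4) (π / 2),
      {θ ∈ Ioo 0 (π / 2) | H θ = C} = {θ₁, θ₂} ∧ θ₁ ≠ θ₂) := by
  have hπ := Real.pi_pos
  -- basic facts for θ ∈ Ioo 0 (π/2)
  have hsin : ∀ θ ∈ Ioo 0 (π / 2), 0 < Real.sin (2 * θ) := fun θ hθ =>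
    Real.sin_pos_of_pos_of_lt_pi (by linarith [hθ.1]) (by linarith [hθ.2])
  -- H θ = C ↔ |cos 2θ| = (μ C) sin 2θ
  have hiff : ∀ C : ℝ, ∀ θ ∈ Ioo 0 (π / 2),
      (H θ = C ↔ |Real.cos (2 * θ)| = (μ * C) * Real.sin (2 * θ)) := by
    intro C θ hθ
    have h1 := hsin θ hθ
    rw [hH θ hθ, div_eq_iff (by positivity)]
    constructor <;> intro h <;> linarith [h]
  -- θ = π/4 facts
  have hq : (π / 4 : ℝ) ∈ Ioo 0 (π / 2) := ⟨by linarith, by linarith⟩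
  have hHq : H (π / 4) = 0 := by
    rw [hH _ hq]
    have : 2 * (π / 4) = π / 2 := by ring
    rw [this, Real.cos_pi_div_two]
    simp
  -- existence of solutions for C > 0, with location
  have main : ∀ C : ℝ, 0 < C → ∃ θ₁ ∈ Ioo 0 (π / 4), ∃ θ₂ ∈ Ioo (π / 4) (π / 2),
      {θ ∈ Ioo 0 (π / 2) | H θ = C} = {θ₁, θ₂} ∧ θ₁ ≠ θ₂ := by
    intro C hC
    set k := μ * C with hkdef
    have hk : 0 < k := by positivity
    set a := Real.arctan (1 / k) with hadef
    have ha0 : 0 < a := by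
      rw [hadef, ← Real.arctan_zero]
      exact Real.arctan_strictMono (by positivity)
    have ha2 : a < π / 2 := Real.arctan_lt_pi_div_two _
    refine ⟨a / 2, ⟨by linarith, by linarith⟩, (π - a) / 2, ⟨by linarith, by linarith⟩, ?_, by linarith⟩
    ext θ
    simp only [mem_sep_iff, mem_insert_iff, mem_singleton_iff]
    constructor
    · rintro ⟨hθ, hHθ⟩
      have h1 := (hiff C θ hθ).mp hHθ
      have h2 := (key_eq k (2 * θ) hk (by linarith [hθ.1]) (by linarith [hθ.2])).mp h1
      rcases h2 with h | h
      · left; linarith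
      · right; linarith
    · rintro (rfl | rfl)
      · have hθ : a / 2 ∈ Ioo 0 (π / 2) := ⟨by linarith, by linarith⟩
        refine ⟨hθ, (hiff C _ hθ).mpr ?_⟩
        have : 2 * (a / 2) = a := by ring
        rw [this]
        exact (key_eq k a hk (by linarith) (by linarith)).mpr (Or.inl rfl)
      · have hθ : (π - a) / 2 ∈ Ioo 0 (π / 2) := ⟨by linarith, by linarith⟩
        refine ⟨hθ, (hiff C _ hθ).mpr ?_⟩
        have : 2 * ((π - a) / 2) = π - a := by ring
        rw [this]
        exact (key_eq k (π - a) hk (by linarith) (by linarith)).mpr (Or.inr rfl)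
  refine ⟨?_, ?_, main⟩
  · intro C hC
    rcases eq_or_lt_of_le hC with rfl | hC
    · exact ⟨π / 4, hq, hHq⟩
    · obtain ⟨θ₁, hθ₁, θ₂, hθ₂, hset, hne⟩ := main C hC
      have : θ₁ ∈ ({θ₁, θ₂} : Set ℝ) := by simp
      rw [← hset] at this
      exact ⟨θ₁, this.1, this.2⟩
  · intro θ hθ
    constructor
    · intro h
      have h1 := (hiff 0 θ hθ).mp h
      simp only [mul_zero, zero_mul] at h1
      have hc : Real.cos (2 * θ) = 0 := abs_eq_zero.mp h1
      have : (2 : ℝ) * θ ∈ Icc 0 π := ⟨by linarith [hθ.1], by linarith [hθ.2]⟩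
      have hpi2 : (π / 2 : ℝ) ∈ Icc 0 π := ⟨by linarith, by linarith⟩
      have := Real.injOn_cos this hpi2 (by rw [hc, Real.cos_pi_div_two])
      linarith
    · rintro rfl
      exact hHq
end

section
/- Let λ, μ, ν > 0, θ ∈ (0, π/2), α, β ∈ ℝ, and set D = μ²·sin²(α+β) + ν²·cos²(α+β). Define E_g = cos²θ·(λ²cos²θ + sin²θ·D), F_g = cos²θ·sin²θ·(λ² − D), G_g = sin²θ·(λ²sin²θ + cos²θ·D), and E_h = cos²θ·(−λ²cos²θ + sin²θ·D), F_h = −cos²θ·sin²θ·(λ² + D), G_h = sin²θ·(−λ²sin²θ + cos²θ·D). Then E_g·G_g − F_g² = λ²·cos²θ·sin²θ·D > 0, E_h·G_h − F_h² = −λ²·cos²θ·sin²θ·D ≠ 0, and (G_h + F_h)/(E_h·G_h − F_h²) = (G_g + F_g)/(E_g·G_g − F_g²), (E_h + F_h)/(E_h·G_h − F_h²) = (E_g + F_g)/(E_g·G_g − F_g²), (G_h − E_h)/(E_h·G_h − F_h²) = (G_g − E_g)/(E_g·G_g − F_g²). -/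
/-!
With `c = cos² θ`, `s = sin² θ` and `L = λ²`, the coefficients for `h` are those for `g` with `L`
replaced by `-L`. Once `c + s = 1` is used, the determinant `E G - F²` and the three numerators
`G + F`, `E + F`, `G - E` are all `L` times an expression free of `L`, so the sign of `L`
cancels from each ratio.
-/

open Real Set

section FirstForm

def firstFormE (L c s D : ℝ) : ℝ := c * (L * c + s * D)

def firstFormF (L c s D : ℝ) : ℝ := c * s * (L - D)

def firstFormG (L c s D : ℝ) : ℝ := s * (L * s + c * D)

variable {L c s D : ℝ}

theorem firstForm_det (hcs : c + s = 1) :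
    firstFormE L c s D * firstFormG L c s D - firstFormF L c s D ^ 2 = L * c * s * D := by
  unfold firstFormE firstFormF firstFormG
  linear_combination L * c * s * D * (c + s + 1) * hcs

theorem firstFormG_add_F (hcs : c + s = 1) :
    firstFormG L c s D + firstFormF L c s D = L * s := by
  unfold firstFormF firstFormG
  linear_combination L * s * hcs

theorem firstFormE_add_F (hcs : c + s = 1) :
    firstFormE L c s D + firstFormF L c s D = L * c := by
  unfold firstFormE firstFormF
  linear_combination L * c * hcs

theorem firstFormG_sub_E (hcs : c + s = 1) :
    firstFormG L c s D - firstFormE L c s D = L * (s - c) := by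
  unfold firstFormE firstFormG
  linear_combination L * (s - c) * hcs

theorem firstFormG_add_F_div_det (hcs : c + s = 1) (hL : L ≠ 0) :
    (firstFormG L c s D + firstFormF L c s D) /
      (firstFormE L c s D * firstFormG L c s D - firstFormF L c s D ^ 2) = s / (c * s * D) := by
  rw [firstFormG_add_F hcs, firstForm_det hcs, show L * c * s * D = L * (c * s * D) by ring,
    mul_div_mul_left _ _ hL]

theorem firstFormE_add_F_div_det (hcs : c + s = 1) (hL : L ≠ 0) :
    (firstFormE L c s D + firstFormF L c s D) /
      (firstFormE L c s D * firstFormG L c s D - firstFormF L c s D ^ 2) = c / (c * s * D) := by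
  rw [firstFormE_add_F hcs, firstForm_det hcs, show L * c * s * D = L * (c * s * D) by ring,
    mul_div_mul_left _ _ hL]

theorem firstFormG_sub_E_div_det (hcs : c + s = 1) (hL : L ≠ 0) :
    (firstFormG L c s D - firstFormE L c s D) /
      (firstFormE L c s D * firstFormG L c s D - firstFormF L c s D ^ 2) =
        (s - c) / (c * s * D) := by
  rw [firstFormG_sub_E hcs, firstForm_det hcs, show L * c * s * D = L * (c * s * D) by ring,
    mul_div_mul_left _ _ hL]

end FirstForm

theorem sq_mul_sin_sq_add_sq_mul_cos_sq_pos {m n : ℝ} (hm : m ≠ 0) (hn : n ≠ 0) (x : ℝ) :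
    0 < m ^ 2 * sin x ^ 2 + n ^ 2 * cos x ^ 2 := by
  rcases eq_or_ne (sin x) 0 with hsin | hsin
  · have hcos : cos x ^ 2 = 1 := by rw [← sin_sq_add_cos_sq x, hsin]; ring
    rw [hsin, hcos]
    positivity
  · positivity

theorem first_fundamental_form_identities_sphere
    (l m n : ℝ) (hl : 0 < l) (hm : 0 < m) (hn : 0 < n)
    (θ : ℝ) (hθ : θ ∈ Ioo 0 (π / 2)) (α β : ℝ)
    (D : ℝ) (hD : D = m ^ 2 * Real.sin (α + β) ^ 2 + n ^ 2 * Real.cos (α + β) ^ 2)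
    (Eg Fg Gg Eh Fh Gh : ℝ)
    (hEg : Eg = Real.cos θ ^ 2 * (l ^ 2 * Real.cos θ ^ 2 + Real.sin θ ^ 2 * D))
    (hFg : Fg = Real.cos θ ^ 2 * Real.sin θ ^ 2 * (l ^ 2 - D))
    (hGg : Gg = Real.sin θ ^ 2 * (l ^ 2 * Real.sin θ ^ 2 + Real.cos θ ^ 2 * D))
    (hEh : Eh = Real.cos θ ^ 2 * (-(l ^ 2) * Real.cos θ ^ 2 + Real.sin θ ^ 2 * D))
    (hFh : Fh = -(Real.cos θ ^ 2 * Real.sin θ ^ 2 * (l ^ 2 + D)))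
    (hGh : Gh = Real.sin θ ^ 2 * (-(l ^ 2) * Real.sin θ ^ 2 + Real.cos θ ^ 2 * D)) :
    (Eg * Gg - Fg ^ 2 = l ^ 2 * Real.cos θ ^ 2 * Real.sin θ ^ 2 * D ∧
      0 < Eg * Gg - Fg ^ 2) ∧
    (Eh * Gh - Fh ^ 2 = -(l ^ 2 * Real.cos θ ^ 2 * Real.sin θ ^ 2 * D) ∧
      Eh * Gh - Fh ^ 2 ≠ 0) ∧
    (Gh + Fh) / (Eh * Gh - Fh ^ 2) = (Gg + Fg) / (Eg * Gg - Fg ^ 2) ∧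
    (Eh + Fh) / (Eh * Gh - Fh ^ 2) = (Eg + Fg) / (Eg * Gg - Fg ^ 2) ∧
    (Gh - Eh) / (Eh * Gh - Fh ^ 2) = (Gg - Eg) / (Eg * Gg - Fg ^ 2) := by
  obtain ⟨hθ₀, hθ₁⟩ := hθ
  have hcos : 0 < cos θ := cos_pos_of_mem_Ioo ⟨by linarith [pi_pos], hθ₁⟩
  have hsin : 0 < sin θ := sin_pos_of_pos_of_lt_pi hθ₀ (by linarith [pi_pos])
  have hDpos : 0 < D := hD ▸ sq_mul_sin_sq_add_sq_mul_cos_sq_pos hm.ne' hn.ne' (α + β)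
  have hcs : cos θ ^ 2 + sin θ ^ 2 = 1 := cos_sq_add_sin_sq θ
  have hL : l ^ 2 ≠ 0 := by positivity
  obtain rfl : Eg = firstFormE (l ^ 2) (cos θ ^ 2) (sin θ ^ 2) D := hEg
  obtain rfl : Fg = firstFormF (l ^ 2) (cos θ ^ 2) (sin θ ^ 2) D := hFg
  obtain rfl : Gg = firstFormG (l ^ 2) (cos θ ^ 2) (sin θ ^ 2) D := hGg
  obtain rfl : Eh = firstFormE (-l ^ 2) (cos θ ^ 2) (sin θ ^ 2) D := hEh
  obtain rfl : Fh = firstFormF (-l ^ 2) (cos θ ^ 2) (sin θ ^ 2) D := by rw [hFh, firstFormF]; ring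
  obtain rfl : Gh = firstFormG (-l ^ 2) (cos θ ^ 2) (sin θ ^ 2) D := hGh
  have hdet_g := firstForm_det (L := l ^ 2) (D := D) hcs
  have hdet_h : _ = -(l ^ 2 * cos θ ^ 2 * sin θ ^ 2 * D) :=
    (firstForm_det (L := -l ^ 2) (D := D) hcs).trans (by ring)
  refine ⟨⟨hdet_g, hdet_g ▸ by positivity⟩, ⟨hdet_h, hdet_h ▸ neg_ne_zero.2 (by positivity)⟩,
    ?_, ?_, ?_⟩
  · rw [firstFormG_add_F_div_det hcs hL, firstFormG_add_F_div_det hcs (neg_ne_zero.2 hL)]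
  · rw [firstFormE_add_F_div_det hcs hL, firstFormE_add_F_div_det hcs (neg_ne_zero.2 hL)]
  · rw [firstFormG_sub_E_div_det hcs hL, firstFormG_sub_E_div_det hcs (neg_ne_zero.2 hL)]
end

section
/- Let λ, μ, ν > 0, θ > 0, α, β ∈ ℝ, and set D = μ²·sin²(α+β) + ν²·cos²(α+β). Define E_g = cosh²θ·(λ²cosh²θ + sinh²θ·D), F_g = −cosh²θ·sinh²θ·(λ² + D), G_g = sinh²θ·(λ²sinh²θ + cosh²θ·D), and E_h = cosh²θ·(−λ²cosh²θ + sinh²θ·D), F_h = cosh²θ·sinh²θ·(λ² − D), G_h = sinh²θ·(−λ²sinh²θ + cosh²θ·D). Then E_g·G_g − F_g² = λ²·cosh²θ·sinh²θ·D > 0, E_h·G_h − F_h² = −λ²·cosh²θ·sinh²θ·D ≠ 0, and (G_h + F_h)/(E_h·G_h − F_h²) = (G_g + F_g)/(E_g·G_g − F_g²), (E_h + F_h)/(E_h·G_h − F_h²) = (E_g + F_g)/(E_g·G_g − F_g²), (G_h − E_h)/(E_h·G_h − F_h²) = (G_g − E_g)/(E_g·G_g − F_g²). -/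
/-!
Write `c = cosh² θ`, `s = sinh² θ`, so that `c - s = 1`. The coefficients for `h` are those for `g`
with `λ²` replaced by `-λ²`, and as functions of this parameter `L` the determinant `E G - F²` and
the numerators `G + F`, `E + F`, `G - E` are all `L` times a factor independent of `L`. Hence each
ratio is independent of `L` as long as `L ≠ 0`, and `D > 0` makes the determinants nonzero.
-/

open Real Set

theorem mul_sin_sq_add_mul_cos_sq_pos {a b : ℝ} (ha : 0 < a) (hb : 0 < b) (x : ℝ) :
    0 < a * sin x ^ 2 + b * cos x ^ 2 :=
  (lt_min ha hb).trans_le <| by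
    nlinarith [min_le_left a b, min_le_right a b, sin_sq_add_cos_sq x, sq_nonneg (sin x),
      sq_nonneg (cos x)]

namespace BergerTorus

-- `L`, `c`, `s` stand for `±λ²`, `cosh² θ`, `sinh² θ`.
def E (L c s D : ℝ) : ℝ := c * (L * c + s * D)

def F (L c s D : ℝ) : ℝ := -(c * s * (L + D))

def G (L c s D : ℝ) : ℝ := s * (L * s + c * D)

variable {L c s D : ℝ}

theorem det_eq (h : c - s = 1) :
    E L c s D * G L c s D - F L c s D ^ 2 = L * c * s * D := by
  have key : c * s * L * D * ((c - s) ^ 2 - 1) = 0 := by rw [h]; ring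
  unfold E F G
  linear_combination key

theorem G_add_F (h : c - s = 1) : G L c s D + F L c s D = L * -s := by
  unfold G F
  linear_combination -(L * s * h)

theorem E_add_F (h : c - s = 1) : E L c s D + F L c s D = L * c := by
  unfold E F
  linear_combination L * c * h

theorem G_sub_E : G L c s D - E L c s D = L * (s ^ 2 - c ^ 2) := by
  unfold G E
  ring

theorem G_add_F_div_det (hL : L ≠ 0) (h : c - s = 1) :
    (G L c s D + F L c s D) / (E L c s D * G L c s D - F L c s D ^ 2) = -s / (c * s * D) := by
  rw [G_add_F h, det_eq h, mul_assoc, mul_assoc, mul_div_mul_left _ _ hL, mul_assoc]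

theorem E_add_F_div_det (hL : L ≠ 0) (h : c - s = 1) :
    (E L c s D + F L c s D) / (E L c s D * G L c s D - F L c s D ^ 2) = c / (c * s * D) := by
  rw [E_add_F h, det_eq h, mul_assoc, mul_assoc, mul_div_mul_left _ _ hL, mul_assoc]

theorem G_sub_E_div_det (hL : L ≠ 0) (h : c - s = 1) :
    (G L c s D - E L c s D) / (E L c s D * G L c s D - F L c s D ^ 2) =
      (s ^ 2 - c ^ 2) / (c * s * D) := by
  rw [G_sub_E, det_eq h, mul_assoc, mul_assoc, mul_div_mul_left _ _ hL, mul_assoc]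

end BergerTorus

open BergerTorus in
theorem first_fundamental_form_identities_dual_space
    (l m n : ℝ) (hl : 0 < l) (hm : 0 < m) (hn : 0 < n)
    (θ : ℝ) (hθ : 0 < θ) (α β : ℝ)
    (D : ℝ) (hD : D = m ^ 2 * Real.sin (α + β) ^ 2 + n ^ 2 * Real.cos (α + β) ^ 2)
    (Eg Fg Gg Eh Fh Gh : ℝ)
    (hEg : Eg = Real.cosh θ ^ 2 * (l ^ 2 * Real.cosh θ ^ 2 + Real.sinh θ ^ 2 * D))
    (hFg : Fg = -(Real.cosh θ ^ 2 * Real.sinh θ ^ 2 * (l ^ 2 + D)))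
    (hGg : Gg = Real.sinh θ ^ 2 * (l ^ 2 * Real.sinh θ ^ 2 + Real.cosh θ ^ 2 * D))
    (hEh : Eh = Real.cosh θ ^ 2 * (-(l ^ 2) * Real.cosh θ ^ 2 + Real.sinh θ ^ 2 * D))
    (hFh : Fh = Real.cosh θ ^ 2 * Real.sinh θ ^ 2 * (l ^ 2 - D))
    (hGh : Gh = Real.sinh θ ^ 2 * (-(l ^ 2) * Real.sinh θ ^ 2 + Real.cosh θ ^ 2 * D)) :
    (Eg * Gg - Fg ^ 2 = l ^ 2 * Real.cosh θ ^ 2 * Real.sinh θ ^ 2 * D ∧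
      0 < Eg * Gg - Fg ^ 2) ∧
    (Eh * Gh - Fh ^ 2 = -(l ^ 2 * Real.cosh θ ^ 2 * Real.sinh θ ^ 2 * D) ∧
      Eh * Gh - Fh ^ 2 ≠ 0) ∧
    (Gh + Fh) / (Eh * Gh - Fh ^ 2) = (Gg + Fg) / (Eg * Gg - Fg ^ 2) ∧
    (Eh + Fh) / (Eh * Gh - Fh ^ 2) = (Eg + Fg) / (Eg * Gg - Fg ^ 2) ∧
    (Gh - Eh) / (Eh * Gh - Fh ^ 2) = (Gg - Eg) / (Eg * Gg - Fg ^ 2) := by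
  have hcs : cosh θ ^ 2 - sinh θ ^ 2 = 1 := by rw [cosh_sq]; ring
  have hD_pos : 0 < D := hD ▸ mul_sin_sq_add_mul_cos_sq_pos (by positivity) (by positivity) _
  have hsinh : 0 < sinh θ := sinh_pos_iff.mpr hθ
  have hdet_pos : 0 < l ^ 2 * cosh θ ^ 2 * sinh θ ^ 2 * D := by positivity
  have hFh' : Fh = F (-(l ^ 2)) (cosh θ ^ 2) (sinh θ ^ 2) D := by rw [hFh, F]; ring
  have hL : l ^ 2 ≠ 0 := by positivity
  have hL' : -(l ^ 2) ≠ 0 := neg_ne_zero.mpr hL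
  have hdet_h := det_eq (L := -(l ^ 2)) (D := D) hcs
  rw [neg_mul, neg_mul, neg_mul] at hdet_h
  subst hEg hFg hGg hEh hFh' hGh
  refine ⟨⟨det_eq hcs, (det_eq hcs).symm ▸ hdet_pos⟩, ⟨hdet_h, hdet_h ▸ neg_ne_zero.mpr hdet_pos.ne'⟩,
    ?_, ?_, ?_⟩
  · exact (G_add_F_div_det hL' hcs).trans (G_add_F_div_det hL hcs).symm
  · exact (E_add_F_div_det hL' hcs).trans (E_add_F_div_det hL hcs).symm
  · exact (G_sub_E_div_det hL' hcs).trans (G_sub_E_div_det hL hcs).symm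
end
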